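/- arXiv:2512.24607 — 5 statements merged into one kernel-verified Lean document; each statement's English description precedes it below -/
import Mathlib

section
/- Let N ≥ 1 and n ≥ 1 be integers, let λ₁, …, λₙ be complex numbers, and set Φ(T) = T·(T − λ₁)⋯(T − λₙ) − 1. Assume that every complex root of Φ is a root of unity. If α, β₁, …, βₙ are complex numbers satisfying α·β₁⋯βₙ = 1 and α^N + (−1)^n·βᵢ^N = λᵢ for every i = 1, …, n, then α is a root of unity. -/
open scoped BigOperators

/-- Key arithmetic consequence in the proof of Theorem 3.1: if every complex root of
`Φ(T) = T·(T − λ₁)⋯(T − λₙ) − 1` is a root of unity, and `(α, β₁, …, βₙ)` satisfies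
`α·β₁⋯βₙ = 1` and `α^N + (−1)^n·βᵢ^N = λᵢ` for every `i`, then `α` is a root of unity. -/
theorem stmt1 (N n : ℕ) (hN : 1 ≤ N) (hn : 1 ≤ n)
    (lam : Fin n → ℂ)
    (hroots : ∀ z : ℂ, z * ∏ i, (z - lam i) - 1 = 0 → ∃ m : ℕ, 0 < m ∧ z ^ m = 1)
    (α : ℂ) (β : Fin n → ℂ)
    (hprod : α * ∏ i, β i = 1)
    (heq : ∀ i, α ^ N + (-1 : ℂ) ^ n * β i ^ N = lam i) :
    ∃ m : ℕ, 0 < m ∧ α ^ m = 1 := by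
  have key : α ^ N * ∏ i, (α ^ N - lam i) - 1 = 0 := by
    have h1 : ∀ i, α ^ N - lam i = (-1 : ℂ) ^ (n + 1) * β i ^ N := by
      intro i
      have := heq i
      rw [pow_succ]
      linear_combination this
    have h2 : ∏ i, (α ^ N - lam i) = ((-1 : ℂ) ^ (n + 1)) ^ n * ∏ i, β i ^ N := by
      rw [Finset.prod_congr rfl fun i _ => h1 i, Finset.prod_mul_distrib,
        Finset.prod_const, Finset.card_univ, Fintype.card_fin]
    have h3 : ((-1 : ℂ) ^ (n + 1)) ^ n = 1 := by
      rw [← pow_mul]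
      exact Even.neg_one_pow (by simpa [Nat.mul_comm] using Nat.even_mul_succ_self n)
    have h4 : α ^ N * ∏ i, β i ^ N = 1 := by
      rw [Finset.prod_pow, ← mul_pow, hprod, one_pow]
    rw [h2, h3, one_mul, h4, sub_self]
  obtain ⟨m, hm, hzm⟩ := hroots (α ^ N) key
  exact ⟨N * m, Nat.mul_pos hN hm, by rw [pow_mul]; exact hzm⟩
end

section
/- Under the assumptions below, f(t) < 0 for every real t with 0 < t < λₙ; moreover 0 < −f(t) < 1 for all such t. -/
open scoped BigOperators
open MeasureTheory Real Set

/-- Under the assumptions (\ref{thmassump}) of the paper, `f(t) < 0` for every real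
`t` with `0 < t < λₙ`; moreover `0 < −f(t) < 1` for all such `t`. -/
theorem stmt3 (N n : ℕ) (hN : 2 ≤ N) (hn : 1 ≤ n)
    (lam : Fin n → ℂ) (hne : ∀ i, lam i ≠ 0) (hinj : Function.Injective lam)
    (f : ℝ → ℝ) (hf : ∀ t : ℝ, (f t : ℂ) = (t : ℂ) * ∏ i, ((t : ℂ) - lam i))
    (ln : ℝ) (hlam : lam ⟨n - 1, by omega⟩ = (ln : ℂ)) (hln0 : 0 < ln) (hln1 : ln < 1)
    (hother : ∀ i : Fin n, i ≠ ⟨n - 1, by omega⟩ →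
      ∀ r : ℝ, lam i = (r : ℂ) → ¬(0 < r ∧ r < 1))
    (hbound : ∀ t : ℝ, 0 ≤ t → t < 1 → |f t| < 1) (hf1 : 0 < f 1)
    (c : ℝ) (hc0 : 0 < c) (hc : (c : ℂ) = (-1 : ℂ) ^ (n - 1) * ∏ i, lam i) :
    ∀ t : ℝ, 0 < t → t < ln → f t < 0 ∧ 0 < -f t ∧ -f t < 1 := by
  set P : ℝ → ℂ := fun t => ∏ i, ((t : ℂ) - lam i) with hP
  set g : ℝ → ℝ := fun t => (P t).re with hg
  have hcont : Continuous g := by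
    apply Complex.continuous_re.comp
    exact continuous_finset_prod _ fun i _ => Complex.continuous_ofReal.sub continuous_const
  have hfg : ∀ t : ℝ, f t = t * g t := by
    intro t
    have := hf t
    have : f t = ((t : ℂ) * P t).re := by rw [← this, Complex.ofReal_re]
    rw [this, Complex.re_ofReal_mul]
  have hg0 : g 0 = -c := by
    have hP0 : P 0 = -(c : ℂ) := by
      have : P 0 = ∏ i, (-lam i) := by simp [hP]
      have h2 : ∏ i, (-lam i) = (-1 : ℂ) ^ n * ∏ i, lam i := by
        have hd := Finset.prod_mul_distrib (s := (Finset.univ : Finset (Fin n)))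
          (f := fun _ : Fin n => (-1 : ℂ)) (g := lam)
        simp only [neg_one_mul] at hd
        rw [hd, Finset.prod_const, Finset.card_univ, Fintype.card_fin]
      rw [this, h2, hc]
      have hpow : ((-1 : ℂ)) ^ n = (-1) ^ (n - 1) * (-1) := by
        rw [← pow_succ]; congr 1; omega
      rw [hpow]; ring
    simp [hg, hP0]
  have hgne : ∀ s : ℝ, 0 ≤ s → s < ln → g s ≠ 0 := by
    intro s hs0 hsln hgs
    rcases eq_or_lt_of_le hs0 with h | h
    · rw [← h] at hgs; rw [hg0] at hgs; linarith
    · have hfs : f s = 0 := by rw [hfg s, hgs, mul_zero]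
      have : (s : ℂ) * P s = 0 := by rw [← hf s, hfs]; simp
      have hPs : P s = 0 := by
        rcases mul_eq_zero.mp this with h' | h'
        · exact absurd (Complex.ofReal_eq_zero.mp h') (ne_of_gt h)
        · exact h'
      obtain ⟨i, _, hi⟩ := Finset.prod_eq_zero_iff.mp hPs
      have hieq : lam i = (s : ℂ) := by
        have := sub_eq_zero.mp hi; exact this.symm
      by_cases hii : i = ⟨n - 1, by omega⟩
      · rw [hii, hlam] at hieq
        have : ln = s := Complex.ofReal_inj.mp hieq
        linarith
      · exact hother i hii s hieq ⟨h, lt_trans hsln hln1⟩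
  intro t ht0 htln
  have hft : f t < 0 := by
    by_contra hcon
    push_neg at hcon
    have hgt : 0 ≤ g t := nonneg_of_mul_nonneg_right (by rwa [← hfg t]) ht0
    have : (0 : ℝ) ∈ Set.Icc (g 0) (g t) := by
      constructor
      · rw [hg0]; linarith
      · exact hgt
    obtain ⟨s, hs, hgs⟩ := intermediate_value_Icc ht0.le hcont.continuousOn this
    exact hgne s hs.1 (lt_of_le_of_lt hs.2 htln) hgs
  refine ⟨hft, by linarith, ?_⟩
  have := hbound t ht0.le (lt_trans htln hln1)
  rw [abs_of_neg hft] at this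
  exact this
end

section
/- Let N ≥ 2 be an integer and let a₁ > a₂ > a₃ > ⋯ be a strictly decreasing sequence of positive real numbers such that Σ_{k=1}^∞ a_k converges. Then Σ_{k=1}^∞ a_k · sin(πk/N) > 0. -/
/-!
Group the series into blocks of `2N` consecutive terms. The weight `sin (π (k + 1) / N)` is
`2N`-periodic in `k` and changes sign after `N` steps, so each block equals
`∑ r < N, (a_{k+r} - a_{k+N+r}) sin (π (r + 1) / N)`: a sum of nonnegative terms whose first
one is positive because `a` is strictly decreasing and `N ≥ 2`.
-/

open Finset Real

theorem HasSum.sum_range_blocks {α : Type*} [AddCommMonoid α] [TopologicalSpace α] [T3Space α]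
    [ContinuousAdd α] {f : ℕ → α} {s : α} (hf : HasSum f s) (m : ℕ) [NeZero m] :
    HasSum (fun j ↦ ∑ r ∈ range m, f (j * m + r)) s := by
  have hprod := (Nat.divModEquiv m).symm.hasSum_iff.mpr hf
  refine hprod.prod_fiberwise fun j ↦ ?_
  rw [← Fin.sum_univ_eq_sum_range]
  exact hasSum_fintype _

section SineWeights

variable {N : ℕ}

theorem sin_pi_mul_add_mul_two_div (hN : N ≠ 0) (j : ℕ) (x : ℝ) :
    sin (π * (j * (2 * N) + x) / N) = sin (π * x / N) := by
  have : π * (j * (2 * N) + x) / N = π * x / N + j * (2 * π) := by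
    field_simp; ring
  rw [this, sin_add_nat_mul_two_pi]

theorem sin_pi_mul_add_self_div (hN : N ≠ 0) (x : ℝ) :
    sin (π * (N + x) / N) = -sin (π * x / N) := by
  have : π * (N + x) / N = π * x / N + π := by
    field_simp; ring
  rw [this, sin_add_pi]

theorem sin_pi_mul_succ_div_nonneg {r : ℕ} (hr : r < N) : 0 ≤ sin (π * ((r : ℝ) + 1) / N) := by
  have hr' : (r : ℝ) + 1 ≤ N := by exact_mod_cast hr
  apply sin_nonneg_of_nonneg_of_le_pi (by positivity)
  rw [div_le_iff₀ (by linarith)]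
  nlinarith [pi_pos]

theorem sin_pi_div_pos (hN : 2 ≤ N) : 0 < sin (π / N) := by
  have hN' : (2 : ℝ) ≤ N := by exact_mod_cast hN
  apply sin_pos_of_pos_of_lt_pi (by positivity)
  rw [div_lt_iff₀ (by linarith)]
  nlinarith [pi_pos]

theorem sum_range_two_mul_eq_sum_sub_mul_sin (hN : N ≠ 0) (a : ℕ → ℝ) (j : ℕ) :
    ∑ r ∈ range (2 * N), a (j * (2 * N) + r) * sin (π * (((j * (2 * N) + r : ℕ) : ℝ) + 1) / N) =
      ∑ r ∈ range N, (a (j * (2 * N) + r) - a (j * (2 * N) + (N + r))) *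
        sin (π * ((r : ℝ) + 1) / N) := by
  rw [two_mul N, sum_range_add, ← sum_add_distrib, ← two_mul]
  refine sum_congr rfl fun r _ ↦ ?_
  push_cast
  rw [add_assoc, sin_pi_mul_add_mul_two_div hN, add_assoc, add_assoc,
    sin_pi_mul_add_mul_two_div hN, sin_pi_mul_add_self_div hN]
  ring

theorem sum_range_sub_mul_sin_pos (hN : 2 ≤ N) {a : ℕ → ℝ} (ha : StrictAnti a) (j : ℕ) :
    0 < ∑ r ∈ range N, (a (j * (2 * N) + r) - a (j * (2 * N) + (N + r))) *
        sin (π * ((r : ℝ) + 1) / N) := by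
  have hdiff : ∀ r, 0 < a (j * (2 * N) + r) - a (j * (2 * N) + (N + r)) := fun r ↦
    sub_pos.mpr (ha (by omega))
  refine sum_pos' (fun r hr ↦ mul_nonneg (hdiff r).le
    (sin_pi_mul_succ_div_nonneg (mem_range.mp hr))) ⟨0, mem_range.mpr (by omega), ?_⟩
  simpa using mul_pos (hdiff 0) (sin_pi_div_pos hN)

end SineWeights

theorem stmt6_general (N : ℕ) (hN : 2 ≤ N) (a : ℕ → ℝ)
    (hanti : StrictAnti a) (hsum : Summable a) :
    0 < ∑' k : ℕ, a k * Real.sin (Real.pi * ((k : ℝ) + 1) / (N : ℝ)) := by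
  have hN0 : N ≠ 0 := by omega
  have : NeZero (2 * N) := ⟨by omega⟩
  have hf : Summable fun k : ℕ ↦ a k * sin (π * ((k : ℝ) + 1) / N) :=
    hsum.abs.of_norm_bounded fun k ↦ by
      simpa [abs_mul] using mul_le_of_le_one_right (abs_nonneg (a k)) (abs_sin_le_one _)
  have hblocks := hf.hasSum.sum_range_blocks (2 * N)
  simp only [sum_range_two_mul_eq_sum_sub_mul_sin hN0] at hblocks
  rw [← hblocks.tsum_eq]
  exact hblocks.summable.tsum_pos (fun j ↦ (sum_range_sub_mul_sin_pos hN hanti j).le) 0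
    (sum_range_sub_mul_sin_pos hN hanti 0)

/-- Grouping argument at the end of the proof of Theorem 4.2: if `N ≥ 2` and
`a₁ > a₂ > ⋯ > 0` is a strictly decreasing summable sequence of positive reals
(here `a k` stands for `a_{k+1}`), then `Σ_{k≥1} a_k·sin(πk/N) > 0`. -/
theorem stmt6 (N : ℕ) (hN : 2 ≤ N) (a : ℕ → ℝ)
    (hpos : ∀ k, 0 < a k) (hanti : StrictAnti a) (hsum : Summable a) :
    0 < ∑' k : ℕ, a k * Real.sin (Real.pi * ((k : ℝ) + 1) / (N : ℝ)) :=
  stmt6_general N hN a hanti hsum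
end

section
/- Under the assumptions below, for every s with 0 < s < 1 the product P(s) := ∏_{i=1}^{n−1} (1 − (λₙ/λᵢ)s) is a positive real number, and for every integer k ≥ 1 one has ∫₀^{λₙ} (−f(t))^{k/N} dt/t = ((−1)^{n−1}λ₁⋯λₙ · λₙ)^{k/N} · ∫₀¹ s^{k/N − 1} (1−s)^{k/N} P(s)^{k/N} ds. -/
/-!
Pulling `-λᵢ` out of every factor `λₙ s - λᵢ` gives `f(λₙ s) = -(c λₙ) s (1 - s) P(s)` with
`c = (-1)^{n-1} λ₁⋯λₙ`. As `f` is real and `c λₙ s (1 - s) ≠ 0` on `(0,1)`, `P(s)` is real there; it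
does not vanish, since a zero would be a root `λᵢ = λₙ s ∈ (0,1)` with `i ≠ n`, so continuity and
`P(0) = 1` make it positive. The integral identity is then the substitution `t = λₙ s` followed by
`(xy)^r = x^r y^r` for nonnegative reals.
-/

open MeasureTheory Real Set

theorem pos_of_continuousOn_Ico_of_ne_zero {α : Type*} [ConditionallyCompleteLinearOrder α]
    [TopologicalSpace α] [OrderTopology α] [DenselyOrdered α] {g : α → ℝ} {a b : α}
    (hg : ContinuousOn g (Ico a b)) (ha : 0 < g a) (hne : ∀ x ∈ Ioo a b, g x ≠ 0)
    {x : α} (hx : x ∈ Ioo a b) : 0 < g x := by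
  by_contra! hle
  obtain ⟨y, hy, hy0⟩ := isPreconnected_Ico.intermediate_value (Ioo_subset_Ico_self hx)
    (left_mem_Ico.2 (hx.1.trans hx.2)) hg ⟨hle, ha.le⟩
  rcases hy.1.eq_or_lt with rfl | hay
  · exact ha.ne' hy0
  · exact hne y ⟨hay, hy.2⟩ hy0

theorem prod_mul_sub_eq {ι K : Type*} [Field K] (S : Finset ι) (lam : ι → K)
    (hne : ∀ i ∈ S, lam i ≠ 0) (a s : K) :
    ∏ i ∈ S, (a * s - lam i) = (-1) ^ S.card * (∏ i ∈ S, lam i) * ∏ i ∈ S, (1 - a / lam i * s) := by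
  rw [← Finset.prod_const, ← Finset.prod_mul_distrib, ← Finset.prod_mul_distrib]
  refine Finset.prod_congr rfl fun i hi => ?_
  field_simp [hne i hi]
  ring

theorem setIntegral_Ioo_div_self_comp_mul (F : ℝ → ℝ) {a : ℝ} (ha : 0 < a) :
    ∫ t in Ioo 0 a, F t / t = ∫ s in Ioo 0 1, F (a * s) / s := by
  have h := intervalIntegral.smul_integral_comp_mul_left (fun t => F t / t) a (a := 0) (b := 1)
  simp only [mul_zero, mul_one, smul_eq_mul] at h
  rw [← integral_Ioc_eq_integral_Ioo, ← integral_Ioc_eq_integral_Ioo,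
    ← intervalIntegral.integral_of_le ha.le, ← intervalIntegral.integral_of_le zero_le_one, ← h,
    ← intervalIntegral.integral_const_mul]
  refine intervalIntegral.integral_congr fun s _ => ?_
  by_cases hs : s = 0
  · simp [hs]
  · field_simp

theorem rpow_mul_div_self_eq {C s p r : ℝ} (hC : 0 ≤ C) (hs0 : 0 < s) (hs1 : s ≤ 1) (hp : 0 ≤ p) :
    (C * (s * ((1 - s) * p))) ^ r / s = C ^ r * (s ^ (r - 1) * (1 - s) ^ r * p ^ r) := by
  have h1s : 0 ≤ 1 - s := by linarith
  rw [mul_rpow hC (by positivity), mul_rpow hs0.le (by positivity), mul_rpow h1s hp,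
    rpow_sub hs0, rpow_one]
  field_simp

section RatioProd

variable {ι : Type*} [Fintype ι] [DecidableEq ι] (lam : ι → ℂ) (j : ι) (a : ℝ)

/-- The paper's `P(s) = ∏_{i ≠ j} (1 - (a / λᵢ) s)`, with `a = λⱼ`. -/
noncomputable def ratioProd (s : ℝ) : ℂ :=
  ∏ i ∈ Finset.univ.erase j, (1 - (a : ℂ) / lam i * s)

theorem ratioProd_zero : ratioProd lam j a 0 = 1 := by
  simp [ratioProd]

theorem continuous_ratioProd : Continuous (ratioProd lam j a) :=
  continuous_finsetProd _ fun _ _ => continuous_const.sub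
    (continuous_const.mul Complex.continuous_ofReal)

variable {lam j a}

theorem ratioProd_ne_zero (hne : ∀ i ≠ j, lam i ≠ 0) {s : ℝ}
    (hs : ∀ i ≠ j, lam i ≠ (a * s : ℝ)) : ratioProd lam j a s ≠ 0 := by
  refine Finset.prod_ne_zero_iff.2 fun i hi h0 => ?_
  have hij := Finset.ne_of_mem_erase hi
  refine hs i hij ?_
  field_simp [hne i hij] at h0
  push_cast
  linear_combination h0

theorem mul_prod_sub_eq_ratioProd (hne : ∀ i ≠ j, lam i ≠ 0) (hj : lam j = a) (s : ℝ) :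
    ((a * s : ℝ) : ℂ) * ∏ i, ((a * s : ℝ) - lam i) =
      -((-1) ^ (Fintype.card ι - 1) * ∏ i, lam i) * (a * s * (1 - s) : ℝ) *
        ratioProd lam j a s := by
  have hfactor := prod_mul_sub_eq (Finset.univ.erase j) lam
    (fun i hi => hne i (Finset.ne_of_mem_erase hi)) (a : ℂ) (s : ℂ)
  rw [Finset.card_erase_of_mem (Finset.mem_univ j), Finset.card_univ] at hfactor
  rw [← Finset.mul_prod_erase _ _ (Finset.mem_univ j),
    ← Finset.mul_prod_erase _ lam (Finset.mem_univ j), hj]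
  push_cast
  rw [hfactor, ratioProd]
  ring

end RatioProd

/-- The substitution `t = λₙ·s` in the proof of Theorem 4.2: for `0 < s < 1` the
product `P(s) = ∏_{i≠n} (1 − (λₙ/λᵢ)s)` is a positive real number, and for every
`k ≥ 1`,
`∫₀^{λₙ} (−f(t))^{k/N} dt/t
  = ((−1)^{n−1}λ₁⋯λₙ·λₙ)^{k/N}·∫₀¹ s^{k/N−1}(1−s)^{k/N}P(s)^{k/N} ds`. -/
theorem stmt9 (N n : ℕ) (hn : 1 ≤ n)
    (lam : Fin n → ℂ) (hne : ∀ i, lam i ≠ 0)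
    (f : ℝ → ℝ) (hf : ∀ t : ℝ, (f t : ℂ) = (t : ℂ) * ∏ i, ((t : ℂ) - lam i))
    (ln : ℝ) (hlam : lam ⟨n - 1, by omega⟩ = (ln : ℂ)) (hln0 : 0 < ln) (hln1 : ln < 1)
    (hother : ∀ i : Fin n, i ≠ ⟨n - 1, by omega⟩ →
      ∀ r : ℝ, lam i = (r : ℂ) → ¬(0 < r ∧ r < 1))
    (c : ℝ) (hc0 : 0 < c) (hc : (c : ℂ) = (-1 : ℂ) ^ (n - 1) * ∏ i, lam i) :
    (∀ s : ℝ, 0 < s → s < 1 →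
      (∏ i ∈ Finset.univ.erase (⟨n - 1, by omega⟩ : Fin n),
          ((1 : ℂ) - ((ln : ℂ) / lam i) * (s : ℂ))).im = 0 ∧
      0 < (∏ i ∈ Finset.univ.erase (⟨n - 1, by omega⟩ : Fin n),
          ((1 : ℂ) - ((ln : ℂ) / lam i) * (s : ℂ))).re) ∧
    ∀ k : ℕ, 1 ≤ k →
      (∫ t in Set.Ioo 0 ln, (-f t) ^ ((k : ℝ) / (N : ℝ)) / t) =
        (c * ln) ^ ((k : ℝ) / (N : ℝ)) *
          ∫ s in Set.Ioo (0 : ℝ) 1,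
            s ^ ((k : ℝ) / (N : ℝ) - 1) * (1 - s) ^ ((k : ℝ) / (N : ℝ)) *
              ((∏ i ∈ Finset.univ.erase (⟨n - 1, by omega⟩ : Fin n),
                  ((1 : ℂ) - ((ln : ℂ) / lam i) * (s : ℂ))).re) ^
                ((k : ℝ) / (N : ℝ)) := by
  set j : Fin n := ⟨n - 1, by omega⟩
  set P := ratioProd lam j ln
  have hfP (s : ℝ) : (f (ln * s) : ℂ) = (-(c * ln * (s * (1 - s))) : ℝ) * P s := by
    rw [hf, mul_prod_sub_eq_ratioProd (fun i _ => hne i) hlam, Fintype.card_fin, ← hc]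
    push_cast
    ring
  have hPim (s : ℝ) (hs : s ∈ Ioo 0 1) : (P s).im = 0 := by
    have h := congrArg Complex.im (hfP s)
    have h1s : 0 < 1 - s := sub_pos.2 hs.2
    have : c * ln * (s * (1 - s)) ≠ 0 := by have := hs.1; positivity
    simpa [Complex.im_ofReal_mul, this] using h.symm
  have hPre (s : ℝ) : -f (ln * s) = c * ln * (s * ((1 - s) * (P s).re)) := by
    have h := congrArg Complex.re (hfP s)
    rw [Complex.ofReal_re, Complex.re_ofReal_mul] at h
    rw [h]
    ring
  have hPpos (s : ℝ) (hs : s ∈ Ioo 0 1) : 0 < (P s).re := by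
    refine pos_of_continuousOn_Ico_of_ne_zero
      (Complex.continuous_re.comp (continuous_ratioProd lam j ln)).continuousOn
      (by simp [ratioProd_zero]) (fun x hx h0 => ?_) hs
    refine ratioProd_ne_zero (fun i _ => hne i) (fun i hi => ?_) (Complex.ext h0 (hPim x hx))
    exact fun h => hother i hi _ h ⟨mul_pos hln0 hx.1, by nlinarith [hx.1, hx.2]⟩
  refine ⟨fun s hs0 hs1 => ⟨hPim s ⟨hs0, hs1⟩, hPpos s ⟨hs0, hs1⟩⟩, fun k _ => ?_⟩
  rw [setIntegral_Ioo_div_self_comp_mul _ hln0, ← integral_const_mul]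
  refine setIntegral_congr_fun measurableSet_Ioo fun s hs => ?_
  rw [hPre, rpow_mul_div_self_eq (by positivity) hs.1 hs.2.le (hPpos s hs).le]
  rfl
end

section
/- Let n and l be positive integers with l odd and 2l < n + 1, and set t₀ = (n + 1 − 2l)/(n + 1). Assume |(t₀ + 1)^{n+1−l}·(t₀ − 1)^l + 1| < 1. Then for every real t with 0 ≤ t < 1 one has |(t + 1)^{n+1−l}·(t − 1)^l + 1| < 1, and at t = 1 the value (1 + 1)^{n+1−l}·(1 − 1)^l + 1 equals 1 > 0. -/
/-!
Since `l` is odd, `(t + 1)^(n+1-l) (t - 1)^l + 1 = 1 - g t` with `g t = (t + 1)^m (1 - t)^l`,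
`m = n + 1 - l`, and `g > 0` on `[0, 1)`. By weighted AM-GM, `g` attains its maximum on `[-1, 1]`
at `t₀ = (m - l)/(m + l)`, where `t₀ + 1` and `1 - t₀` are in the ratio `m : l`; the hypothesis
at `t₀` says `g t₀ < 2`, hence `0 < g t < 2` and `|1 - g t| < 1` on `[0, 1)`.
-/

open Set

theorem pow_mul_pow_le_one_of_natCast_mul_add_natCast_mul_eq {x y : ℝ} (hx : 0 ≤ x) (hy : 0 ≤ y)
    {m l : ℕ} (h : m * x + l * y = m + l) : x ^ m * y ^ l ≤ 1 := by
  rcases Nat.eq_zero_or_pos (m + l) with hN₀ | hN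
  · obtain ⟨rfl, rfl⟩ : m = 0 ∧ l = 0 := by omega
    simp
  replace hN : (0 : ℝ) < m + l := by exact_mod_cast hN
  have amgm := Real.geom_mean_le_arith_mean2_weighted (w₁ := m / (m + l)) (w₂ := l / (m + l))
    (by positivity) (by positivity) hx hy (by field_simp)
  have hmean : (m : ℝ) / (m + l) * x + l / (m + l) * y = 1 := by
    field_simp
    linarith
  have hgeom : (x ^ ((m : ℝ) / (m + l)) * y ^ ((l : ℝ) / (m + l))) ^ (m + l) = x ^ m * y ^ l := by
    rw [mul_pow, ← Real.rpow_mul_natCast hx, ← Real.rpow_mul_natCast hy]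
    push_cast
    rw [div_mul_cancel₀ _ hN.ne', div_mul_cancel₀ _ hN.ne', Real.rpow_natCast, Real.rpow_natCast]
  rw [← hgeom]
  exact pow_le_one₀ (by positivity) (hmean ▸ amgm)

theorem add_one_pow_mul_one_sub_pow_le {m l : ℕ} (hm : 0 < m) (hl : 0 < l) {t : ℝ}
    (ht : t ∈ Icc (-1) 1) :
    (t + 1) ^ m * (1 - t) ^ l ≤
      (((m : ℝ) - l) / (m + l) + 1) ^ m * (1 - ((m : ℝ) - l) / (m + l)) ^ l := by
  set s : ℝ := ((m : ℝ) - l) / (m + l)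
  have hm' : (0 : ℝ) < m := by exact_mod_cast hm
  have hl' : (0 : ℝ) < l := by exact_mod_cast hl
  have hs₁ : s + 1 = 2 * m / (m + l) := by
    simp only [s]
    field_simp
    ring
  have hs₂ : 1 - s = 2 * l / (m + l) := by
    simp only [s]
    field_simp
    ring
  have hs₁pos : 0 < s + 1 := hs₁ ▸ by positivity
  have hs₂pos : 0 < 1 - s := hs₂ ▸ by positivity
  have hratio : (m : ℝ) * ((t + 1) / (s + 1)) + l * ((1 - t) / (1 - s)) = m + l := by
    rw [hs₁, hs₂]
    field_simp
    ring
  have key := pow_mul_pow_le_one_of_natCast_mul_add_natCast_mul_eq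
    (div_nonneg (by linarith [ht.1]) hs₁pos.le) (div_nonneg (by linarith [ht.2]) hs₂pos.le) hratio
  calc (t + 1) ^ m * (1 - t) ^ l
      = ((t + 1) / (s + 1)) ^ m * ((1 - t) / (1 - s)) ^ l * ((s + 1) ^ m * (1 - s) ^ l) := by
        rw [div_pow, div_pow]
        field_simp
    _ ≤ (s + 1) ^ m * (1 - s) ^ l := mul_le_of_le_one_left (by positivity) key

theorem stmt14_general (n l : ℕ) (hodd : Odd l)
    (h2l : 2 * l < n + 1) (t₀ : ℝ) (ht₀ : t₀ = ((n : ℝ) + 1 - 2 * l) / ((n : ℝ) + 1))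
    (habs : |(t₀ + 1) ^ (n + 1 - l) * (t₀ - 1) ^ l + 1| < 1) :
    (∀ t : ℝ, 0 ≤ t → t < 1 → |(t + 1) ^ (n + 1 - l) * (t - 1) ^ l + 1| < 1) ∧
    ((1 : ℝ) + 1) ^ (n + 1 - l) * ((1 : ℝ) - 1) ^ l + 1 = 1 ∧
    (0 : ℝ) < 1 := by
  have hm : 0 < n + 1 - l := by omega
  have ht₀' : t₀ = (((n + 1 - l : ℕ) : ℝ) - l) / ((n + 1 - l : ℕ) + l) := by
    rw [ht₀, Nat.cast_sub (by omega)]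
    push_cast
    ring
  have hodd_pow (s : ℝ) : (s - 1) ^ l = -(1 - s) ^ l := by
    rw [← hodd.neg_pow, neg_sub]
  have hmax : (t₀ + 1) ^ (n + 1 - l) * (1 - t₀) ^ l < 2 := by
    rw [hodd_pow, abs_lt] at habs
    linarith [habs.1]
  refine ⟨fun t ht₁ ht₂ => ?_, by simp [zero_pow hodd.pos.ne'], one_pos⟩
  have hpos : 0 < (t + 1) ^ (n + 1 - l) * (1 - t) ^ l := by
    have : 0 < 1 - t := by linarith
    positivity
  have hle := add_one_pow_mul_one_sub_pow_le hm hodd.pos (t := t) ⟨by linarith, ht₂.le⟩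
  rw [← ht₀'] at hle
  rw [hodd_pow, abs_lt]
  constructor <;> linarith

/-- Verification of assumption (iii) for Example 4.4: with `l` odd, `0 < l`,
`2l < n+1`, `t₀ = (n+1−2l)/(n+1)` and `|f(t₀)| < 1` where
`f(t) = (t+1)^{n+1−l}(t−1)^l + 1`, one has `|f(t)| < 1` for all `0 ≤ t < 1`, and
`f(1) = 1 > 0`. -/
theorem stmt14 (n l : ℕ) (hn : 0 < n) (hl : 0 < l) (hodd : Odd l)
    (h2l : 2 * l < n + 1) (t₀ : ℝ) (ht₀ : t₀ = ((n : ℝ) + 1 - 2 * l) / ((n : ℝ) + 1))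
    (habs : |(t₀ + 1) ^ (n + 1 - l) * (t₀ - 1) ^ l + 1| < 1) :
    (∀ t : ℝ, 0 ≤ t → t < 1 → |(t + 1) ^ (n + 1 - l) * (t - 1) ^ l + 1| < 1) ∧
    ((1 : ℝ) + 1) ^ (n + 1 - l) * ((1 : ℝ) - 1) ^ l + 1 = 1 ∧
    (0 : ℝ) < 1 :=
  stmt14_general n l hodd h2l t₀ ht₀ habs
end
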